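/- arXiv:2209.00210 — 2 statements merged into one kernel-verified Lean document; each statement's English description precedes it below -/
import Mathlib

section
/- There exists a probability distribution π on Bool × Bool (worlds (b₀,b₁) for atoms σ₀,σ₁) satisfying the p-rules (σ₀ ← ¬σ₁):[0.1] and (σ₁ ←):[0.1] under P-CWA, namely: Pr(σ₁) = 0.1, Pr(σ₀|¬σ₁) = 0.1, and Pr(σ₀ ∧ σ₁) = 0 (closed-world constraint), and for this distribution Pr(σ₁) + Pr(σ₀ ∧ ¬σ₁) = 0.1 + 0.09 = 0.19 < 1. Hence an argument A = ⟨{σ₁}⊢σ₁⟩ attacking B = ⟨{σ₀,¬σ₁}⊢σ₀⟩ can satisfy Pr(A) + Pr(B) < 1. -/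
theorem stmt7 : ∃ π : Bool × Bool → ℝ,
    (∀ w, 0 ≤ π w) ∧ (∑ w, π w) = 1 ∧
    π (true, true) + π (false, true) = 0.1 ∧
    π (true, false) / (π (true, false) + π (false, false)) = 0.1 ∧
    π (true, true) = 0 ∧
    (π (true, true) + π (false, true)) + π (true, false) < 1 := by
  use fun w => match w with
    | (true, true) => 0
    | (false, true) => 0.1
    | (true, false) => 0.09
    | (false, false) => 0.81
  refine ⟨?_, ?_, by norm_num, by norm_num, by norm_num, by norm_num⟩
  · rintro ⟨_|_, _|_⟩ <;> norm_num
  · simp [Fintype.sum_prod_type, Fin.sum_univ_succ]; norm_num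
end

section
/- Any nonnegative π on Bool × Bool × Bool summing to 1 that satisfies the three P-CWA pairwise-exclusion constraints Pr(σ₀ ∧ σ₁) = 0, Pr(σ₁ ∧ σ₂) = 0, Pr(σ₂ ∧ σ₀) = 0 and the three conditional constraints Pr(σ₀|¬σ₁) = 1, Pr(σ₁|¬σ₂) = 1, Pr(σ₂|¬σ₀) = 1 (interpreted as Pr(head ∧ body) = Pr(body)) must assign Pr(¬σ₀∧¬σ₁∧¬σ₂) ≤ 0, and in fact no such π exists. -/
theorem stmt16 :
    ¬ ∃ π : Bool × Bool × Bool → ℝ,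
      (∀ w, 0 ≤ π w) ∧ (∑ w, π w) = 1 ∧
      (∑ w ∈ Finset.univ.filter
          (fun w : Bool × Bool × Bool => w.1 = true ∧ w.2.1 = false), π w) =
        (∑ w ∈ Finset.univ.filter
          (fun w : Bool × Bool × Bool => w.2.1 = false), π w) ∧
      (∑ w ∈ Finset.univ.filter
          (fun w : Bool × Bool × Bool => w.2.1 = true ∧ w.2.2 = false), π w) =
        (∑ w ∈ Finset.univ.filter
          (fun w : Bool × Bool × Bool => w.2.2 = false), π w) ∧
      (∑ w ∈ Finset.univ.filter
          (fun w : Bool × Bool × Bool => w.2.2 = true ∧ w.1 = false), π w) =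
        (∑ w ∈ Finset.univ.filter
          (fun w : Bool × Bool × Bool => w.1 = false), π w) ∧
      (∑ w ∈ Finset.univ.filter
          (fun w : Bool × Bool × Bool => w.1 = true ∧ w.2.1 = true), π w) = 0 ∧
      (∑ w ∈ Finset.univ.filter
          (fun w : Bool × Bool × Bool => w.2.1 = true ∧ w.2.2 = true), π w) = 0 ∧
      (∑ w ∈ Finset.univ.filter
          (fun w : Bool × Bool × Bool => w.2.2 = true ∧ w.1 = true), π w) = 0 := by
  rintro ⟨π, hpos, hsum, h1, h2, h3, h4, h5, h6⟩
  simp only [Fintype.sum_prod_type, Finset.sum_filter, Fintype.sum_bool] at *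
  norm_num at h1 h2 h3 h4 h5 h6 hsum
  have p0 := hpos (false,false,false)
  have p1 := hpos (false,false,true)
  have p2 := hpos (false,true,false)
  have p3 := hpos (false,true,true)
  have p4 := hpos (true,false,false)
  have p5 := hpos (true,false,true)
  have p6 := hpos (true,true,false)
  have p7 := hpos (true,true,true)
  linarith
end
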